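/- arXiv:2212.12241 — 3 statements merged into one kernel-verified Lean document; each statement's English description precedes it below -/
import Mathlib

section
/- Let r > 1 be an integer and {X_n, n ≥ 1} a sequence of real random variables stochastically dominated by a random variable X with E|X| < ∞. Let {b_n} be a nondecreasing sequence of positive constants and {a_{n,k} : 1 ≤ k ≤ n+1, n ≥ 1} an array of positive constants satisfying: (a) Σ_{k=1}^{n+1} a_{n,k} = O(b_{r^n}) as n → ∞; and (b') Σ_{k=1}^{n+1} r^k E[|X| 1{|X| > b_{r^{k−1}}}] = o(b_{r^n}) as n → ∞. Then, for every ε > 0, there exist a positive integer n₀ and a constant C(r) > 0 such that for all n ≥ n₀: P{ max_{1 ≤ m < r^{n+1}} |Σ_{k=1}^{m} (X_k − E X_k)| > ε b_{r^n} } ≤ C(r) r^n P{|X| > b_{r^{n+1}}} + (C(r) r^n/ε²) Σ_{k=1}^{n+1} a_{n,k}^{−2} E[X² 1{|X| ≤ b_{r^k}}] + (C(r) r^n/ε²) Σ_{k=1}^{n+1} (b_{r^k}²/a_{n,k}²) P{|X| > b_{r^{k−1}}} + (C(r)/ε²) Σ_{k=1}^{n+1} a_{n,k}^{−2} max_{1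 ≤ ℓ ≤ r−1} Σ_{h=0}^{r^{n−k+1}−1} [ Σ_{1+h r^k ≤ i < j ≤ h r^k + ℓ r^{k−1}} G_{X_i,X_j}(b_{r^{k−1}}) ]⁺ + (C(r)/ε²) Σ_{k=1}^{n+1} a_{n,k}^{−2} Σ_{h=0}^{r^{n−k+1}−1} [ Σ_{1+h r^k ≤ i < j ≤ h r^k + r^k} H_{X_i,X_j}(b_{r^{k−1}}, b_{r^k}) ]⁺. -/
/-!
Truncate at the levels `L k = b (r ^ k)`. Off an exceptional event, every partial sum `S_M` with
`M < r ^ (n + 1)` is controlled by an `r`-adic chaining: the base-`r` digits of `M` cut `(0, M]`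
into one block `(⌊M / r ^ k⌋ r ^ k, ⌊M / r ^ (k - 1)⌋ r ^ (k - 1)]` per level `k`, on which
the variables are truncated at `L (k - 1)`, while the corrections `g_{L k} - g_{L (k - 1)}` over
`(⌊M / r ^ k⌋ r ^ k, M]` are dominated by a full `r ^ k`-block of `h_{L (k - 1), L k}`. The
centering errors add up to `O(∑ r ^ k E[|Y|; |Y| > L (k - 1)]) = o(b (r ^ n))` by (b'), and by (a)
the deviation levels `c k = ε a_{n,k} / (4 C_a)` add up to at most `ε b (r ^ n) / 4`. The
exceptional event is that some `|X i|` exceeds `L (n + 1)` or that some block sum deviates from its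
mean by `c k`; Chebyshev bounds the latter, the block variance being split into second moments,
controlled through the domination by `Y`, and the positive part of the pairwise covariances.
-/

open MeasureTheory Finset Filter

noncomputable section

variable {Ω : Type*} [MeasurableSpace Ω]

/-- Truncation at level `L`: `g_L(t) = max (-L) (min t L)`. -/
def gtr (L t : ℝ) : ℝ := max (-L) (min t L)

/-- `h_{L,K}(t) = |g_K(t) - g_L(t)|`. -/
def htr (L K t : ℝ) : ℝ := |gtr K t - gtr L t|

/-- Covariance `Cov(U,V) = E[UV] - E[U] E[V]`. -/
def cov (μ : Measure Ω) (U V : Ω → ℝ) : ℝ :=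
  (∫ ω, U ω * V ω ∂μ) - (∫ ω, U ω ∂μ) * (∫ ω, V ω ∂μ)

/-- `G_{X,Y}(L) = Cov(g_L(X), g_L(Y))`. -/
def Gcov (μ : Measure Ω) (X Y : Ω → ℝ) (L : ℝ) : ℝ :=
  cov μ (fun ω => gtr L (X ω)) (fun ω => gtr L (Y ω))

/-- `H_{X,Y}(L,K) = Cov(h_{L,K}(X), h_{L,K}(Y))`. -/
def Hcov (μ : Measure Ω) (X Y : Ω → ℝ) (L K : ℝ) : ℝ :=
  cov μ (fun ω => htr L K (X ω)) (fun ω => htr L K (Y ω))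

/-- Maximum of `f 0, f 1, ..., f N`. -/
def fmax (N : ℕ) (f : ℕ → ℝ) : ℝ :=
  (Finset.range (N + 1)).sup' Finset.nonempty_range_add_one f

/-- Sum over pairs `a ≤ i < j ≤ b` of `f i j`. -/
def pairSum (a b : ℕ) (f : ℕ → ℕ → ℝ) : ℝ :=
  ∑ i ∈ Finset.Icc a b, ∑ j ∈ Finset.Icc (i + 1) b, f i j

/-- `{X_n}` is stochastically dominated by `Y`. -/
def StochDom (μ : Measure Ω) (X : ℕ → Ω → ℝ) (Y : Ω → ℝ) : Prop :=
  ∃ C : ℝ, 0 < C ∧ ∀ n : ℕ, 1 ≤ n → ∀ t : ℝ, 0 < t →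
    μ {ω | t < |X n ω|} ≤ ENNReal.ofReal C * μ {ω | t < |Y ω|}

open ProbabilityTheory

section Truncation

variable {L K t : ℝ}

lemma continuous_gtr (L : ℝ) : Continuous (gtr L) :=
  continuous_const.max (continuous_id.min continuous_const)

lemma continuous_htr (L K : ℝ) : Continuous (htr L K) :=
  ((continuous_gtr K).sub (continuous_gtr L)).abs

lemma abs_gtr_le (hL : 0 ≤ L) (t : ℝ) : |gtr L t| ≤ L := by
  unfold gtr; rw [abs_le]; constructor <;> simp only [min_def, max_def] <;> split_ifs <;> linarith

lemma abs_gtr_le_abs (hL : 0 ≤ L) (t : ℝ) : |gtr L t| ≤ |t| := by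
  unfold gtr; rw [abs_le]
  rcases abs_cases t with ⟨h1, h2⟩ | ⟨h1, h2⟩ <;> rw [h1] <;>
    constructor <;> simp only [min_def, max_def] <;> split_ifs <;> linarith

lemma gtr_of_abs_le (h : |t| ≤ K) : gtr K t = t := by
  rw [abs_le] at h
  rw [gtr, min_eq_left h.2, max_eq_right h.1]

lemma abs_gtr_sub_le (K t : ℝ) : |gtr K t - t| ≤ max (|t| - K) 0 := by
  unfold gtr; rw [abs_le]
  rcases abs_cases t with ⟨h1, h2⟩ | ⟨h1, h2⟩ <;> rw [h1] <;>
    constructor <;> simp only [min_def, max_def] <;> split_ifs <;> linarith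

lemma htr_nonneg (L K t : ℝ) : 0 ≤ htr L K t := abs_nonneg _

lemma htr_le_max_abs_sub (hLK : L ≤ K) (t : ℝ) :
    htr L K t ≤ max (|t| - L) 0 := by
  unfold htr gtr; rw [abs_le]
  rcases abs_cases t with ⟨h1, h2⟩ | ⟨h1, h2⟩ <;> rw [h1] <;>
    constructor <;> simp only [min_def, max_def] <;> split_ifs <;> linarith

lemma htr_le (hL : 0 ≤ L) (hLK : L ≤ K) (t : ℝ) : htr L K t ≤ K := by
  unfold htr gtr; rw [abs_le]
  constructor <;> simp only [min_def, max_def] <;> split_ifs <;> linarith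

lemma htr_of_abs_le (hLK : L ≤ K) (h : |t| ≤ L) : htr L K t = 0 := by
  rw [htr, gtr_of_abs_le (h.trans hLK), gtr_of_abs_le h, sub_self, abs_zero]

lemma gtr_sq_le (hL : 0 ≤ L) (t : ℝ) : gtr L t ^ 2 ≤ min (t ^ 2) (L ^ 2) := by
  rw [← sq_abs (gtr L t), ← sq_abs t, ← sq_abs L, abs_of_nonneg hL]
  exact le_min (pow_le_pow_left₀ (abs_nonneg _) (abs_gtr_le_abs hL t) 2)
    (pow_le_pow_left₀ (abs_nonneg _) (abs_gtr_le hL t) 2)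

lemma htr_sq_le_ite (hL : 0 ≤ L) (hLK : L ≤ K) (t : ℝ) :
    htr L K t ^ 2 ≤ if L < |t| then K ^ 2 else 0 := by
  split_ifs with h
  · exact pow_le_pow_left₀ (htr_nonneg L K t) (htr_le hL hLK t) 2
  · rw [htr_of_abs_le hLK (not_lt.1 h)]
    norm_num

lemma memLp_gtr_comp {μ : Measure Ω} [IsFiniteMeasure μ] (hL : 0 ≤ L) {Z : Ω → ℝ}
    (hZ : Measurable Z) (p : ENNReal) : MemLp (fun ω => gtr L (Z ω)) p μ :=
  MemLp.of_bound ((continuous_gtr L).measurable.comp hZ).aestronglyMeasurable L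
    (ae_of_all _ fun _ => abs_gtr_le hL _)

lemma memLp_htr_comp {μ : Measure Ω} [IsFiniteMeasure μ] (hL : 0 ≤ L) (hLK : L ≤ K)
    {Z : Ω → ℝ} (hZ : Measurable Z) (p : ENNReal) : MemLp (fun ω => htr L K (Z ω)) p μ :=
  MemLp.of_bound ((continuous_htr L K).measurable.comp hZ).aestronglyMeasurable K
    (ae_of_all _ fun ω => by
      rw [Real.norm_eq_abs, abs_of_nonneg (htr_nonneg _ _ _)]
      exact htr_le hL hLK _)

end Truncation

lemma le_fmax (f : ℕ → ℝ) {N m : ℕ} (hm : m ≤ N) : f m ≤ fmax N f :=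
  le_sup' f (mem_range.2 (Nat.lt_succ_of_le hm))

lemma fmax_le {N : ℕ} {f : ℕ → ℝ} {c : ℝ} (h : ∀ m ≤ N, f m ≤ c) : fmax N f ≤ c :=
  sup'_le _ _ fun m hm => h m (Nat.lt_succ_iff.1 (mem_range.1 hm))

lemma fmax_nonneg {N : ℕ} {f : ℕ → ℝ} (h : 0 ≤ f 0) : 0 ≤ fmax N f :=
  h.trans (le_fmax f (Nat.zero_le N))

lemma integral_min_sq_le {μ : Measure Ω} [IsFiniteMeasure μ] {L K : ℝ} {Y : Ω → ℝ}
    (hY : Measurable Y) (hL : 0 ≤ L) (hLK : L ≤ K) :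
    ∫ ω, min (Y ω ^ 2) (L ^ 2) ∂μ ≤
      ∫ ω in {ω | |Y ω| ≤ K}, Y ω ^ 2 ∂μ + K ^ 2 * μ.real {ω | L < |Y ω|} := by
  have hs₁ : MeasurableSet {ω | |Y ω| ≤ K} := measurableSet_le hY.abs measurable_const
  have hs₂ : MeasurableSet {ω | L < |Y ω|} := measurableSet_lt measurable_const hY.abs
  have hsq : Integrable ({ω | |Y ω| ≤ K}.indicator fun ω => Y ω ^ 2) μ := by
    refine Integrable.of_bound ((hY.pow_const 2).indicator hs₁).aestronglyMeasurable (K ^ 2)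
      (ae_of_all _ fun ω => ?_)
    simp only [Set.indicator_apply, Set.mem_ofPred_eq]
    split_ifs with h
    · rw [Real.norm_eq_abs, abs_of_nonneg (sq_nonneg _), ← sq_abs]
      exact pow_le_pow_left₀ (abs_nonneg _) h 2
    · simpa using sq_nonneg K
  rw [← integral_indicator hs₁, mul_comm, ← smul_eq_mul, ← integral_indicator_const _ hs₂,
    ← integral_add hsq ((integrable_const _).indicator hs₂)]
  refine integral_mono (Integrable.of_bound
    ((hY.pow_const 2).min measurable_const).aestronglyMeasurable (L ^ 2) (ae_of_all _ fun ω => ?_))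
    (hsq.add ((integrable_const _).indicator hs₂)) fun ω => ?_
  · rw [Real.norm_eq_abs, abs_of_nonneg (le_min (sq_nonneg _) (sq_nonneg _))]
    exact min_le_right _ _
  · simp only [Set.indicator_apply, Set.mem_ofPred_eq]
    have hLK2 : L ^ 2 ≤ K ^ 2 := pow_le_pow_left₀ hL hLK 2
    split_ifs with h₁ h₂ h₂
    · linarith [min_le_left (Y ω ^ 2) (L ^ 2), sq_nonneg K]
    · linarith [min_le_left (Y ω ^ 2) (L ^ 2)]
    · linarith [min_le_right (Y ω ^ 2) (L ^ 2)]
    · exact absurd (lt_of_le_of_lt hLK (not_le.1 h₁)) h₂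

section TailDomination

-- `StochDom μ X Y` unfolds to `∃ C, 0 < C ∧ ∀ n, 1 ≤ n → TailDominated μ C (X n) Y`.
def TailDominated (μ : Measure Ω) (C : ℝ) (X Y : Ω → ℝ) : Prop :=
  ∀ t : ℝ, 0 < t → μ {ω | t < |X ω|} ≤ ENNReal.ofReal C * μ {ω | t < |Y ω|}

variable {μ : Measure Ω} {C K L : ℝ} {X Y : Ω → ℝ}

namespace TailDominated

lemma measureReal_le [IsFiniteMeasure μ] (h : TailDominated μ C X Y) (hC : 0 ≤ C) {t : ℝ}
    (ht : 0 < t) : μ.real {ω | t < |X ω|} ≤ C * μ.real {ω | t < |Y ω|} := by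
  have := ENNReal.toReal_mono (by finiteness) (h t ht)
  rwa [ENNReal.toReal_mul, ENNReal.toReal_ofReal hC] at this

lemma lintegral_le (h : TailDominated μ C X Y) (hX : AEMeasurable X μ)
    (hY : AEMeasurable Y μ) :
    ∫⁻ ω, ENNReal.ofReal |X ω| ∂μ ≤
      ENNReal.ofReal C * ∫⁻ ω, ENNReal.ofReal |Y ω| ∂μ := by
  rw [lintegral_eq_lintegral_meas_lt μ (ae_of_all _ fun _ => abs_nonneg _) hX.abs,
    lintegral_eq_lintegral_meas_lt μ (ae_of_all _ fun _ => abs_nonneg _) hY.abs,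
    ← lintegral_const_mul' _ _ ENNReal.ofReal_ne_top]
  exact setLIntegral_mono' measurableSet_Ioi fun t ht => h t ht

lemma integrable (h : TailDominated μ C X Y) (hX : AEStronglyMeasurable X μ)
    (hY : Integrable Y μ) : Integrable X μ := by
  refine ⟨hX, ?_⟩
  have hYfin := hY.hasFiniteIntegral
  simp only [hasFiniteIntegral_iff_norm, Real.norm_eq_abs] at hYfin ⊢
  exact (h.lintegral_le hX.aemeasurable hY.aemeasurable).trans_lt
    (ENNReal.mul_lt_top ENNReal.ofReal_lt_top hYfin)

lemma integral_abs_le (h : TailDominated μ C X Y) (hC : 0 ≤ C) (hX : AEStronglyMeasurable X μ)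
    (hY : Integrable Y μ) : ∫ ω, |X ω| ∂μ ≤ C * ∫ ω, |Y ω| ∂μ := by
  have hint := (h.integrable hX hY).abs
  rw [← ENNReal.ofReal_le_ofReal_iff (mul_nonneg hC (integral_nonneg fun _ => abs_nonneg _)),
    ENNReal.ofReal_mul hC,
    ofReal_integral_eq_lintegral_ofReal hint (ae_of_all _ fun _ => abs_nonneg _),
    ofReal_integral_eq_lintegral_ofReal hY.abs (ae_of_all _ fun _ => abs_nonneg _)]
  exact h.lintegral_le hX.aemeasurable hY.aemeasurable

lemma posPart_abs_sub (h : TailDominated μ C X Y) (hK : 0 ≤ K) :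
    TailDominated μ C (fun ω => max (|X ω| - K) 0) (fun ω => max (|Y ω| - K) 0) := by
  have hset : ∀ (Z : Ω → ℝ) {t : ℝ}, 0 < t →
      {ω | t < |max (|Z ω| - K) 0|} = {ω | K + t < |Z ω|} := by
    intro Z t ht
    ext ω
    rw [Set.mem_ofPred_eq, Set.mem_ofPred_eq, abs_of_nonneg (le_max_right _ _), lt_max_iff]
    constructor
    · rintro (h | h) <;> linarith
    · intro h; left; linarith
  intro t ht
  rw [hset X ht, hset Y ht]
  exact h _ (by linarith)

lemma min_sq (h : TailDominated μ C X Y) (L : ℝ) :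
    TailDominated μ C (fun ω => min (X ω ^ 2) (L ^ 2)) (fun ω => min (Y ω ^ 2) (L ^ 2)) := by
  have hset : ∀ (Z : Ω → ℝ) {t : ℝ}, 0 < t → t < L ^ 2 →
      {ω | t < |min (Z ω ^ 2) (L ^ 2)|} = {ω | √t < |Z ω|} := by
    intro Z t ht htL
    ext ω
    rw [Set.mem_ofPred_eq, Set.mem_ofPred_eq, abs_of_nonneg (le_min (sq_nonneg _) (sq_nonneg L)),
      lt_min_iff, ← Real.sqrt_sq_eq_abs, Real.sqrt_lt_sqrt_iff ht.le, and_iff_left htL]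
  intro t ht
  rcases lt_or_ge t (L ^ 2) with htL | htL
  · rw [hset X ht htL, hset Y ht htL]
    exact h _ (Real.sqrt_pos.2 ht)
  · have : {ω | t < |min (X ω ^ 2) (L ^ 2)|} = ∅ := by
      ext ω
      rw [Set.mem_ofPred_eq, abs_of_nonneg (le_min (sq_nonneg _) (sq_nonneg L))]
      exact iff_of_false (not_lt.2 ((min_le_right _ _).trans htL)) id
    simp [this]

lemma integral_posPart_abs_sub_le (h : TailDominated μ C X Y) (hC : 0 ≤ C) (hK : 0 ≤ K)
    (hX : Measurable X) (hY : Measurable Y) (hYi : Integrable Y μ) :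
    ∫ ω, max (|X ω| - K) 0 ∂μ ≤ C * ∫ ω in {ω | K < |Y ω|}, |Y ω| ∂μ := by
  have hs : MeasurableSet {ω | K < |Y ω|} := measurableSet_lt measurable_const hY.abs
  have hpos : ∀ Z : Ω → ℝ, ∀ ω, |max (|Z ω| - K) 0| = max (|Z ω| - K) 0 :=
    fun Z ω => abs_of_nonneg (le_max_right _ _)
  have hYK : Integrable (fun ω => max (|Y ω| - K) 0) μ :=
    hYi.abs.mono ((hY.abs.sub_const K).max measurable_const).aestronglyMeasurable
      (ae_of_all _ fun ω => by
        simp only [Real.norm_eq_abs, hpos Y, abs_abs]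
        exact max_le (by linarith [abs_nonneg (Y ω)]) (abs_nonneg _))
  calc ∫ ω, max (|X ω| - K) 0 ∂μ
      = ∫ ω, |max (|X ω| - K) 0| ∂μ := by simp only [hpos X]
    _ ≤ C * ∫ ω, |max (|Y ω| - K) 0| ∂μ :=
        (h.posPart_abs_sub hK).integral_abs_le hC
          ((hX.abs.sub_const K).max measurable_const).aestronglyMeasurable (by simpa only [hpos Y])
    _ ≤ C * ∫ ω in {ω | K < |Y ω|}, |Y ω| ∂μ := by
        rw [← integral_indicator hs]
        refine mul_le_mul_of_nonneg_left ?_ hC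
        simp only [hpos Y]
        refine integral_mono hYK (hYi.abs.indicator hs) fun ω => ?_
        simp only [Set.indicator_apply, Set.mem_ofPred_eq]
        split_ifs with hω
        · exact max_le (by linarith) (abs_nonneg _)
        · exact (max_eq_right (by linarith)).le

variable [IsFiniteMeasure μ]

lemma abs_integral_gtr_sub_le (h : TailDominated μ C X Y) (hC : 0 ≤ C) (hK : 0 ≤ K)
    (hX : Measurable X) (hY : Measurable Y) (hYi : Integrable Y μ) :
    |∫ ω, gtr K (X ω) ∂μ - ∫ ω, X ω ∂μ| ≤
      C * ∫ ω in {ω | K < |Y ω|}, |Y ω| ∂μ := by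
  have hXi := h.integrable hX.aestronglyMeasurable hYi
  have hgi : Integrable (fun ω => gtr K (X ω)) μ :=
    Integrable.of_bound ((continuous_gtr K).measurable.comp hX).aestronglyMeasurable K
      (ae_of_all _ fun ω => abs_gtr_le hK _)
  rw [← integral_sub hgi hXi]
  refine (abs_integral_le_integral_abs).trans
    ((integral_mono (hgi.sub hXi).abs (hXi.abs.sub (integrable_const K)).pos_part
      fun ω => abs_gtr_sub_le K (X ω)).trans ?_)
  exact h.integral_posPart_abs_sub_le hC hK hX hY hYi

lemma integral_htr_le (h : TailDominated μ C X Y) (hC : 0 ≤ C) (hL : 0 ≤ L) (hLK : L ≤ K)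
    (hX : Measurable X) (hY : Measurable Y) (hYi : Integrable Y μ) :
    ∫ ω, htr L K (X ω) ∂μ ≤ C * ∫ ω in {ω | L < |Y ω|}, |Y ω| ∂μ := by
  have hXi := h.integrable hX.aestronglyMeasurable hYi
  refine (integral_mono_of_nonneg (ae_of_all _ fun ω => htr_nonneg _ _ _)
    (hXi.abs.sub (integrable_const L)).pos_part
    (ae_of_all _ fun ω => htr_le_max_abs_sub hLK (X ω))).trans ?_
  exact h.integral_posPart_abs_sub_le hC hL hX hY hYi

lemma integral_gtr_sq_le (h : TailDominated μ C X Y) (hC : 0 ≤ C) (hL : 0 ≤ L) (hLK : L ≤ K)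
    (hX : Measurable X) (hY : Measurable Y) :
    ∫ ω, gtr L (X ω) ^ 2 ∂μ ≤
      C * (∫ ω in {ω | |Y ω| ≤ K}, Y ω ^ 2 ∂μ + K ^ 2 * μ.real {ω | L < |Y ω|}) := by
  have hmin : ∀ {Z : Ω → ℝ}, Measurable Z →
      Integrable (fun ω => min (Z ω ^ 2) (L ^ 2)) μ :=
    fun hZ => Integrable.of_bound ((hZ.pow_const 2).min measurable_const).aestronglyMeasurable
      (L ^ 2) (ae_of_all _ fun ω => by
        rw [Real.norm_eq_abs, abs_of_nonneg (le_min (sq_nonneg _) (sq_nonneg _))]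
        exact min_le_right _ _)
  have habs : ∀ (Z : Ω → ℝ) ω, |min (Z ω ^ 2) (L ^ 2)| = min (Z ω ^ 2) (L ^ 2) :=
    fun Z ω => abs_of_nonneg (le_min (sq_nonneg _) (sq_nonneg _))
  calc ∫ ω, gtr L (X ω) ^ 2 ∂μ ≤ ∫ ω, |min (X ω ^ 2) (L ^ 2)| ∂μ := by
        simp only [habs X]
        refine integral_mono_of_nonneg (ae_of_all _ fun ω => sq_nonneg _) (hmin hX)
          (ae_of_all _ fun ω => gtr_sq_le hL (X ω))
    _ ≤ C * ∫ ω, |min (Y ω ^ 2) (L ^ 2)| ∂μ :=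
        (h.min_sq L).integral_abs_le hC (hmin hX).aestronglyMeasurable (hmin hY)
    _ ≤ _ := by
        simp only [habs Y]
        exact mul_le_mul_of_nonneg_left (integral_min_sq_le hY hL hLK) hC

lemma integral_htr_sq_le (h : TailDominated μ C X Y) (hC : 0 ≤ C) (hL : 0 < L) (hLK : L ≤ K)
    (hX : Measurable X) :
    ∫ ω, htr L K (X ω) ^ 2 ∂μ ≤ K ^ 2 * (C * μ.real {ω | L < |Y ω|}) := by
  have hs : MeasurableSet {ω | L < |X ω|} := measurableSet_lt measurable_const hX.abs
  calc ∫ ω, htr L K (X ω) ^ 2 ∂μ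
      ≤ ∫ ω, {ω | L < |X ω|}.indicator (fun _ => K ^ 2) ω ∂μ := by
        refine integral_mono_of_nonneg (ae_of_all _ fun ω => sq_nonneg _)
          ((integrable_const _).indicator hs) (ae_of_all _ fun ω => ?_)
        simpa only [Set.indicator_apply, Set.mem_ofPred_eq] using htr_sq_le_ite hL.le hLK (X ω)
    _ = K ^ 2 * μ.real {ω | L < |X ω|} := by
        rw [integral_indicator_const _ hs, smul_eq_mul, mul_comm]
    _ ≤ K ^ 2 * (C * μ.real {ω | L < |Y ω|}) := by
        gcongr
        exact h.measureReal_le hC hL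

end TailDominated

end TailDomination

lemma sum_Icc_sum_Icc_eq_add_two_mul_pairSum (a b : ℕ) {F : ℕ → ℕ → ℝ}
    (hF : ∀ i j, F i j = F j i) :
    ∑ i ∈ Icc a b, ∑ j ∈ Icc a b, F i j = ∑ i ∈ Icc a b, F i i + 2 * pairSum a b F := by
  have hsplit : ∀ i ∈ Icc a b, ∑ j ∈ Icc a b, F i j =
      ∑ j ∈ Ico a i, F i j + (F i i + ∑ j ∈ Icc (i + 1) b, F i j) := by
    intro i hi
    rw [mem_Icc] at hi
    have hset : Icc a b = Ico a i ∪ insert i (Icc (i + 1) b) := by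
      ext j; simp only [mem_Icc, mem_union, mem_Ico, mem_insert]; omega
    rw [hset, sum_union (by rw [disjoint_left]; simp only [mem_Ico, mem_insert, mem_Icc]; omega),
      sum_insert (by simp)]
  have hlower : ∑ i ∈ Icc a b, ∑ j ∈ Ico a i, F i j = pairSum a b F := by
    rw [pairSum, sum_comm' (t' := Icc a b) (s' := fun j => Icc (j + 1) b) fun i j => by
      simp only [mem_Icc, mem_Ico]; omega]
    exact sum_congr rfl fun j _ => sum_congr rfl fun i _ => hF i j
  rw [sum_congr rfl hsplit, sum_add_distrib, sum_add_distrib, hlower, pairSum]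
  ring

lemma cov_eq_covariance {μ : Measure Ω} [IsProbabilityMeasure μ] {U V : Ω → ℝ}
    (hU : MemLp U 2 μ) (hV : MemLp V 2 μ) : cov μ U V = covariance U V μ :=
  (covariance_eq_sub hU hV).symm

lemma measureReal_le_abs_sum_sub_integral_le {μ : Measure Ω} [IsProbabilityMeasure μ]
    (f : ℕ → Ω → ℝ) {a b : ℕ} (hf : ∀ i ∈ Icc a b, MemLp (f i) 2 μ) {c : ℝ}
    (hc : 0 < c) :
    μ.real {ω | c ≤ |∑ i ∈ Icc a b, f i ω - ∫ x, ∑ i ∈ Icc a b, f i x ∂μ|} ≤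
      (∑ i ∈ Icc a b, ∫ ω, f i ω ^ 2 ∂μ +
        2 * max (pairSum a b fun i j => cov μ (f i) (f j)) 0) / c ^ 2 := by
  have hS : MemLp (fun ω => ∑ i ∈ Icc a b, f i ω) 2 μ := memLp_finsetSum (Icc a b) hf
  refine ENNReal.toReal_le_of_le_ofReal (by positivity)
    ((meas_ge_le_variance_div_sq hS hc).trans (ENNReal.ofReal_le_ofReal ?_))
  gcongr
  rw [variance_fun_sum' hf,
    sum_Icc_sum_Icc_eq_add_two_mul_pairSum a b fun i j => covariance_comm (f i) (f j)]
  gcongr ?_ + 2 * ?_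
  · refine sum_le_sum fun i hi => ?_
    rw [covariance_self (hf i hi).aemeasurable]
    exact variance_le_expectation_sq (hf i hi).aestronglyMeasurable
  · refine le_of_eq_of_le ?_ (le_max_left _ _)
    unfold pairSum
    refine sum_congr rfl fun i hi => sum_congr rfl fun j hj =>
      (cov_eq_covariance (hf i hi) (hf j ?_)).symm
    simp only [mem_Icc] at hi hj ⊢; omega

lemma sum_Ioc_eq_sum_blocks_add_sum_increments {N : ℕ → ℕ} (hN : Antitone N)
    (w : ℕ → ℕ → ℝ) (K : ℕ) :
    ∑ i ∈ Ioc (N K) (N 0), w K i =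
      ∑ k ∈ Icc 1 K, ∑ i ∈ Ioc (N k) (N (k - 1)), w (k - 1) i +
        ∑ k ∈ Icc 1 K, ∑ i ∈ Ioc (N k) (N 0), (w k i - w (k - 1) i) := by
  induction K with
  | zero => simp
  | succ K ih =>
    rw [sum_Icc_succ_top (by omega), sum_Icc_succ_top (by omega), Nat.add_sub_cancel]
    calc ∑ i ∈ Ioc (N (K + 1)) (N 0), w (K + 1) i
        = ∑ i ∈ Ioc (N (K + 1)) (N 0), w K i +
            ∑ i ∈ Ioc (N (K + 1)) (N 0), (w (K + 1) i - w K i) := by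
          rw [← sum_add_distrib]; simp
      _ = _ := by
          rw [← sum_Ioc_consecutive (w K) (hN K.le_succ) (hN (Nat.zero_le K)), ih]
          ring

lemma div_pow_mul_pow_antitone (M r : ℕ) : Antitone fun k => M / r ^ k * r ^ k := by
  refine antitone_nat_of_succ_le fun k => ?_
  rw [pow_succ, ← Nat.div_div_eq_div_mul, ← mul_assoc]
  rw [mul_right_comm]
  exact Nat.mul_le_mul_right _ (Nat.div_mul_le_self _ _)

lemma div_pow_pred_mul_pow_pred {r k : ℕ} (hk : 1 ≤ k) (M : ℕ) :
    M / r ^ (k - 1) * r ^ (k - 1) = M / r ^ k * r ^ k + M / r ^ (k - 1) % r * r ^ (k - 1) := by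
  obtain ⟨k, rfl⟩ := Nat.exists_eq_add_of_le' hk
  rw [Nat.add_sub_cancel, pow_succ, ← Nat.div_div_eq_div_mul]
  conv_lhs => rw [← Nat.div_add_mod (M / r ^ k) r]
  ring

lemma abs_sum_le_of_abs_block_sums_le {r n M : ℕ} (hM : M < r ^ (n + 1)) (u : ℕ → ℕ → ℝ)
    (c D : ℕ → ℝ)
    (hU : ∀ k ∈ Icc 1 (n + 1), ∀ h < r ^ (n + 1 - k), ∀ l < r,
      |∑ i ∈ Ioc (h * r ^ k) (h * r ^ k + l * r ^ (k - 1)), u (k - 1) i| ≤ c k)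
    (hD : ∀ k ∈ Icc 1 (n + 1), ∀ h < r ^ (n + 1 - k), ∀ t ≤ r ^ k,
      |∑ i ∈ Ioc (h * r ^ k) (h * r ^ k + t), (u k i - u (k - 1) i)| ≤ D k) :
    |∑ i ∈ Ioc 0 M, u (n + 1) i| ≤ ∑ k ∈ Icc 1 (n + 1), (c k + D k) := by
  have hr : 0 < r := Nat.pos_of_ne_zero (by rintro rfl; simp at hM)
  have hq : ∀ k ∈ Icc 1 (n + 1), M / r ^ k < r ^ (n + 1 - k) := by
    intro k hk
    rw [mem_Icc] at hk
    refine Nat.div_lt_of_lt_mul ?_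
    rwa [← pow_add, Nat.add_sub_cancel' hk.2]
  -- `(0, M]` is cut at the points `⌊M / r ^ k⌋ r ^ k`, `k = n + 1, …, 0`.
  have key := sum_Ioc_eq_sum_blocks_add_sum_increments (div_pow_mul_pow_antitone M r) u (n + 1)
  simp only [pow_zero, Nat.div_one, mul_one, Nat.div_eq_of_lt hM, zero_mul] at key
  rw [key, sum_add_distrib]
  refine (abs_add_le _ _).trans (add_le_add
    ((abs_sum_le_sum_abs _ _).trans (sum_le_sum fun k hk => ?_))
    ((abs_sum_le_sum_abs _ _).trans (sum_le_sum fun k hk => ?_)))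
  · rw [div_pow_pred_mul_pow_pred (mem_Icc.1 hk).1]
    exact hU k hk _ (hq k hk) _ (Nat.mod_lt _ hr)
  · have hM' : M = M / r ^ k * r ^ k + M % r ^ k := (Nat.div_add_mod' M _).symm
    have := hD k hk _ (hq k hk) (M % r ^ k) (Nat.mod_lt _ (pow_pos hr k)).le
    rwa [← hM'] at this

lemma Ioc_eq_Icc_one_add (a b : ℕ) : Ioc a b = Icc (1 + a) b := by
  rw [add_comm, Icc_add_one_left_eq_Ioc]

lemma sum_Icc_one_add_le_mul {a m : ℕ} {f : ℕ → ℝ} {B : ℝ}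
    (hf : ∀ i ∈ Icc (1 + a) (a + m), f i ≤ B) :
    ∑ i ∈ Icc (1 + a) (a + m), f i ≤ m * B := by
  refine (sum_le_sum hf).trans_eq ?_
  rw [sum_const, Nat.card_Icc, nsmul_eq_mul, show a + m + 1 - (1 + a) = m by omega]

section Blocks

variable (μ : Measure Ω) (r : ℕ) (X : ℕ → Ω → ℝ) (L : ℕ → ℝ)

def truncBlockSum (k h l : ℕ) (ω : Ω) : ℝ :=
  ∑ i ∈ Icc (1 + h * r ^ k) (h * r ^ k + (l + 1) * r ^ (k - 1)), gtr (L (k - 1)) (X i ω)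

def excessBlockSum (k h : ℕ) (ω : Ω) : ℝ :=
  ∑ i ∈ Icc (1 + h * r ^ k) (h * r ^ k + r ^ k), htr (L (k - 1)) (L k) (X i ω)

def deviationEvent (Z : Ω → ℝ) (c : ℝ) : Set Ω :=
  {ω | c ≤ |Z ω - ∫ x, Z x ∂μ|}

def badEvent (n : ℕ) (c : ℕ → ℝ) : Set Ω :=
  (⋃ i ∈ Icc 1 (r ^ (n + 1) - 1), {ω | L (n + 1) < |X i ω|}) ∪
    ⋃ k ∈ Icc 1 (n + 1), ⋃ h ∈ range (r ^ (n + 1 - k)),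
      ((⋃ l ∈ range (r - 1), deviationEvent μ (truncBlockSum r X L k h l) (c k)) ∪
        deviationEvent μ (excessBlockSum r X L k h) (c k))

variable {μ r X L} {Y : Ω → ℝ} {Cd : ℝ}

lemma sum_Ioc_sub_integral_eq (f : ℕ → Ω → ℝ) {a b : ℕ}
    (hf : ∀ i ∈ Ioc a b, Integrable (f i) μ) (ω : Ω) :
    ∑ i ∈ Ioc a b, (f i ω - ∫ x, f i x ∂μ) =
      ∑ i ∈ Icc (1 + a) b, f i ω - ∫ x, ∑ i ∈ Icc (1 + a) b, f i x ∂μ := by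
  rw [sum_sub_distrib, ← Ioc_eq_Icc_one_add, integral_finsetSum _ hf]

lemma abs_sum_centered_gtr_le [IsFiniteMeasure μ] (hX : ∀ i, 1 ≤ i → Measurable (X i))
    {k h : ℕ} (hL : 0 ≤ L (k - 1)) {c : ℝ} (hc : 0 ≤ c) {ω : Ω}
    (hω : ∀ l < r - 1, ω ∉ deviationEvent μ (truncBlockSum r X L k h l) c) {l : ℕ}
    (hl : l < r) :
    |∑ i ∈ Ioc (h * r ^ k) (h * r ^ k + l * r ^ (k - 1)),
      (gtr (L (k - 1)) (X i ω) - ∫ x, gtr (L (k - 1)) (X i x) ∂μ)| ≤ c := by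
  rcases l with _ | l
  · simpa using hc
  rw [sum_Ioc_sub_integral_eq _ (fun i hi => (memLp_gtr_comp hL (hX i (by
    simp only [mem_Ioc] at hi; omega)) 1).integrable le_rfl)]
  exact (not_le.1 (hω l (by omega))).le

lemma abs_sum_centered_gtr_sub_le [IsFiniteMeasure μ]
    (hX : ∀ i, 1 ≤ i → Measurable (X i))
    (hdom : ∀ i, 1 ≤ i → TailDominated μ Cd (X i) Y) (hCd : 0 ≤ Cd) (hY : Measurable Y)
    (hYi : Integrable Y μ) {k h : ℕ} (hL : 0 ≤ L (k - 1)) (hLK : L (k - 1) ≤ L k) {c : ℝ}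
    {ω : Ω} (hω : ω ∉ deviationEvent μ (excessBlockSum r X L k h) c) {t : ℕ}
    (ht : t ≤ r ^ k) :
    |∑ i ∈ Ioc (h * r ^ k) (h * r ^ k + t),
      ((gtr (L k) (X i ω) - ∫ x, gtr (L k) (X i x) ∂μ) -
        (gtr (L (k - 1)) (X i ω) - ∫ x, gtr (L (k - 1)) (X i x) ∂μ))| ≤
      c + 2 * (r ^ k * (Cd * ∫ x in {x | L (k - 1) < |Y x|}, |Y x| ∂μ)) := by
  -- `|g_{L k} - g_{L (k - 1)}| = h_{L (k - 1), L k}`, and the `h`'s are nonnegative, so the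
  -- partial block is dominated by the full one.
  set d : ℕ → Ω → ℝ := fun i x => htr (L (k - 1)) (L k) (X i x)
  set s := Ioc (h * r ^ k) (h * r ^ k + r ^ k)
  have hs : ∀ i ∈ s, 1 ≤ i := fun i hi => by simp only [s, mem_Ioc] at hi; omega
  have hdi : ∀ i ∈ s, Integrable (d i) μ :=
    fun i hi => (memLp_htr_comp hL hLK (hX i (hs i hi)) 1).integrable le_rfl
  have hpt : ∀ i ∈ s, |(gtr (L k) (X i ω) - ∫ x, gtr (L k) (X i x) ∂μ) -
      (gtr (L (k - 1)) (X i ω) - ∫ x, gtr (L (k - 1)) (X i x) ∂μ)| ≤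
        d i ω + ∫ x, d i x ∂μ := by
    intro i hi
    have hg : ∀ {L' : ℝ}, 0 ≤ L' → Integrable (fun x => gtr L' (X i x)) μ :=
      fun hL' => (memLp_gtr_comp hL' (hX i (hs i hi)) 1).integrable le_rfl
    rw [sub_sub_sub_comm, ← integral_sub (hg (hL.trans hLK)) (hg hL)]
    exact (abs_sub _ _).trans (add_le_add le_rfl abs_integral_le_integral_abs)
  have hdev : ∑ i ∈ s, d i ω - ∫ x, ∑ i ∈ s, d i x ∂μ < c := by
    have : ¬c ≤ |∑ i ∈ s, d i ω - ∫ x, ∑ i ∈ s, d i x ∂μ| := by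
      rw [show s = Icc (1 + h * r ^ k) (h * r ^ k + r ^ k) from Ioc_eq_Icc_one_add _ _]
      exact hω
    exact (le_abs_self _).trans_lt (not_le.1 this)
  have hmean : ∑ i ∈ s, ∫ x, d i x ∂μ ≤
      r ^ k * (Cd * ∫ x in {x | L (k - 1) < |Y x|}, |Y x| ∂μ) := by
    refine (sum_le_sum fun i hi => (hdom i (hs i hi)).integral_htr_le hCd hL hLK
      (hX i (hs i hi)) hY hYi).trans_eq ?_
    rw [sum_const, Nat.card_Ioc, Nat.add_sub_cancel_left, nsmul_eq_mul, Nat.cast_pow]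
  calc _ ≤ ∑ i ∈ Ioc (h * r ^ k) (h * r ^ k + t), (d i ω + ∫ x, d i x ∂μ) :=
        (abs_sum_le_sum_abs _ _).trans (sum_le_sum fun i hi => hpt i (Ioc_subset_Ioc_right
          (by omega) hi))
    _ ≤ ∑ i ∈ s, (d i ω + ∫ x, d i x ∂μ) :=
        sum_le_sum_of_subset_of_nonneg (Ioc_subset_Ioc_right (by omega)) fun i _ _ =>
          add_nonneg (htr_nonneg _ _ _) (integral_nonneg fun _ => htr_nonneg _ _ _)
    _ = (∑ i ∈ s, d i ω - ∫ x, ∑ i ∈ s, d i x ∂μ) +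
          2 * ∑ i ∈ s, ∫ x, d i x ∂μ := by
        rw [integral_finsetSum _ hdi, sum_add_distrib]; ring
    _ ≤ _ := by linarith

lemma abs_sum_sub_integral_le_of_notMem_badEvent [IsFiniteMeasure μ] {c : ℕ → ℝ}
    (hX : ∀ i, 1 ≤ i → Measurable (X i))
    (hdom : ∀ i, 1 ≤ i → TailDominated μ Cd (X i) Y) (hCd : 0 ≤ Cd) (hY : Measurable Y)
    (hYi : Integrable Y μ) (hL : Monotone L) (hL0 : 0 ≤ L 0)
    {n M : ℕ} (hc : ∀ k ∈ Icc 1 (n + 1), 0 ≤ c k) (hM : M < r ^ (n + 1)) {ω : Ω}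
    (hω : ω ∉ badEvent μ r X L n c) :
    |∑ i ∈ Icc 1 M, (X i ω - ∫ x, X i x ∂μ)| ≤
      2 * ∑ k ∈ Icc 1 (n + 1), c k + 3 * Cd *
        ∑ k ∈ Icc 1 (n + 1), (r : ℝ) ^ k * ∫ x in {x | L (k - 1) < |Y x|}, |Y x| ∂μ := by
  simp only [badEvent, Set.mem_union, Set.mem_iUnion, exists_prop, not_or, not_exists,
    not_and] at hω
  obtain ⟨hA, hB⟩ := hω
  set τ : ℕ → ℝ := fun k => ∫ x in {x | L (k - 1) < |Y x|}, |Y x| ∂μ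
  set u : ℕ → ℕ → ℝ := fun j i => gtr (L j) (X i ω) - ∫ x, gtr (L j) (X i x) ∂μ
    with hu
  have hLnn : ∀ k, 0 ≤ L k := fun k => hL0.trans (hL k.zero_le)
  have hchain : |∑ i ∈ Ioc 0 M, u (n + 1) i| ≤
      ∑ k ∈ Icc 1 (n + 1), (c k + (c k + 2 * (r ^ k * (Cd * τ k)))) :=
    abs_sum_le_of_abs_block_sums_le hM u c _
      (fun k hk h hh l hl => abs_sum_centered_gtr_le hX (hLnn _) (hc k hk)
        (fun l' hl' => (hB k hk h (mem_range.2 hh)).1 l' (mem_range.2 hl')) hl)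
      (fun k hk h hh t ht => abs_sum_centered_gtr_sub_le hX hdom hCd hY hYi (hLnn _)
        (hL (Nat.sub_le k 1)) (hB k hk h (mem_range.2 hh)).2 ht)
  have hcenter : ∀ i ∈ Icc 1 M,
      |(X i ω - ∫ x, X i x ∂μ) - u (n + 1) i| ≤ Cd * τ (n + 1) := by
    intro i hi
    rw [mem_Icc] at hi
    have hXi : X i ω = gtr (L (n + 1)) (X i ω) :=
      (gtr_of_abs_le (not_lt.1 (hA i (mem_Icc.2 ⟨hi.1, by omega⟩)))).symm
    rw [hu, hXi, sub_sub_sub_cancel_left]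
    refine ((hdom i hi.1).abs_integral_gtr_sub_le hCd (hLnn _) (hX i hi.1) hY hYi).trans ?_
    refine mul_le_mul_of_nonneg_left (setIntegral_mono_set hYi.abs.integrableOn
      (ae_of_all _ fun _ => abs_nonneg _) (LE.le.eventuallyLE fun x hx => ?_)) hCd
    exact (hL (Nat.le_succ n)).trans_lt hx
  have hτ : ∀ k, 0 ≤ τ k := fun k => integral_nonneg fun _ => abs_nonneg _
  have hlast : (r : ℝ) ^ (n + 1) * τ (n + 1) ≤ ∑ k ∈ Icc 1 (n + 1), (r : ℝ) ^ k * τ k :=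
    single_le_sum (fun k _ => mul_nonneg (by positivity) (hτ k)) (mem_Icc.2 ⟨by omega, le_rfl⟩)
  have hMr : (M : ℝ) * τ (n + 1) ≤ (r : ℝ) ^ (n + 1) * τ (n + 1) :=
    mul_le_mul_of_nonneg_right (by exact_mod_cast hM.le) (hτ _)
  have hsplit : ∑ k ∈ Icc 1 (n + 1), (c k + (c k + 2 * (r ^ k * (Cd * τ k)))) =
      2 * ∑ k ∈ Icc 1 (n + 1), c k +
        2 * Cd * ∑ k ∈ Icc 1 (n + 1), (r : ℝ) ^ k * τ k := by
    rw [mul_sum, mul_sum, ← sum_add_distrib]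
    exact sum_congr rfl fun k _ => by ring
  calc |∑ i ∈ Icc 1 M, (X i ω - ∫ x, X i x ∂μ)|
      = |∑ i ∈ Ioc 0 M, u (n + 1) i +
          ∑ i ∈ Icc 1 M, ((X i ω - ∫ x, X i x ∂μ) - u (n + 1) i)| := by
        rw [Ioc_eq_Icc_one_add, add_zero, ← sum_add_distrib]
        simp only [add_sub_cancel]
    _ ≤ ∑ k ∈ Icc 1 (n + 1), (c k + (c k + 2 * (r ^ k * (Cd * τ k)))) +
          M * (Cd * τ (n + 1)) := by
        refine (abs_add_le _ _).trans (add_le_add hchain ((abs_sum_le_sum_abs _ _).trans ?_))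
        refine (sum_le_sum hcenter).trans_eq ?_
        rw [sum_const, Nat.card_Icc, Nat.add_sub_cancel, nsmul_eq_mul]
    _ ≤ _ := by
        rw [hsplit]
        nlinarith [mul_le_mul_of_nonneg_left hlast hCd, mul_le_mul_of_nonneg_left hMr hCd]

variable [IsProbabilityMeasure μ]

lemma measureReal_deviationEvent_truncBlockSum_le (hX : ∀ i, 1 ≤ i → Measurable (X i))
    (hdom : ∀ i, 1 ≤ i → TailDominated μ Cd (X i) Y) (hCd : 0 ≤ Cd) (hY : Measurable Y)
    {k h l : ℕ} (hk : 1 ≤ k) (hl : l + 1 ≤ r) (hL : 0 ≤ L (k - 1)) (hLK : L (k - 1) ≤ L k)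
    {c : ℝ} (hc : 0 < c) :
    μ.real (deviationEvent μ (truncBlockSum r X L k h l) c) ≤
      (r ^ k * (Cd * (∫ x in {x | |Y x| ≤ L k}, Y x ^ 2 ∂μ +
          L k ^ 2 * μ.real {x | L (k - 1) < |Y x|})) +
        2 * max (pairSum (1 + h * r ^ k) (h * r ^ k + (l + 1) * r ^ (k - 1))
          fun i j => Gcov μ (X i) (X j) (L (k - 1))) 0) / c ^ 2 := by
  have hi : ∀ i ∈ Icc (1 + h * r ^ k) (h * r ^ k + (l + 1) * r ^ (k - 1)), 1 ≤ i :=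
    fun i hi => by simp only [mem_Icc] at hi; omega
  refine (measureReal_le_abs_sum_sub_integral_le (fun i ω => gtr (L (k - 1)) (X i ω))
    (fun i hi' => memLp_gtr_comp hL (hX i (hi i hi')) 2) hc).trans ?_
  have hsize : ((l + 1) * r ^ (k - 1) : ℕ) ≤ (r : ℝ) ^ k := by
    rw [← Nat.cast_pow, Nat.cast_le, ← Nat.sub_add_cancel hk, pow_succ', Nat.add_sub_cancel]
    exact Nat.mul_le_mul_right _ hl
  gcongr
  · refine (sum_Icc_one_add_le_mul fun i hi' => (hdom i (hi i hi')).integral_gtr_sq_le hCd hL hLK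
      (hX i (hi i hi')) hY).trans (mul_le_mul_of_nonneg_right hsize ?_)
    exact mul_nonneg hCd (add_nonneg (setIntegral_nonneg
      (measurableSet_le hY.abs measurable_const) fun _ _ => sq_nonneg _) (by positivity))
  · exact le_rfl

lemma measureReal_deviationEvent_excessBlockSum_le (hX : ∀ i, 1 ≤ i → Measurable (X i))
    (hdom : ∀ i, 1 ≤ i → TailDominated μ Cd (X i) Y) (hCd : 0 ≤ Cd) {k h : ℕ}
    (hL : 0 < L (k - 1)) (hLK : L (k - 1) ≤ L k) {c : ℝ} (hc : 0 < c) :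
    μ.real (deviationEvent μ (excessBlockSum r X L k h) c) ≤
      (r ^ k * (L k ^ 2 * (Cd * μ.real {x | L (k - 1) < |Y x|})) +
        2 * max (pairSum (1 + h * r ^ k) (h * r ^ k + r ^ k)
          fun i j => Hcov μ (X i) (X j) (L (k - 1)) (L k)) 0) / c ^ 2 := by
  have hi : ∀ i ∈ Icc (1 + h * r ^ k) (h * r ^ k + r ^ k), 1 ≤ i :=
    fun i hi => by simp only [mem_Icc] at hi; omega
  refine (measureReal_le_abs_sum_sub_integral_le (fun i ω => htr (L (k - 1)) (L k) (X i ω))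
    (fun i hi' => memLp_htr_comp hL.le hLK (hX i (hi i hi')) 2) hc).trans ?_
  gcongr
  · exact_mod_cast sum_Icc_one_add_le_mul fun i hi' =>
      (hdom i (hi i hi')).integral_htr_sq_le hCd hL hLK (hX i (hi i hi'))
  · exact le_rfl

lemma sum_measureReal_deviationEvent_le (hr : 1 ≤ r) (hX : ∀ i, 1 ≤ i → Measurable (X i))
    (hdom : ∀ i, 1 ≤ i → TailDominated μ Cd (X i) Y) (hCd : 0 ≤ Cd) (hY : Measurable Y)
    {n k : ℕ} (hk : k ∈ Icc 1 (n + 1)) (hL : 0 < L (k - 1)) (hLK : L (k - 1) ≤ L k)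
    {c : ℝ} (hc : 0 < c) :
    ∑ h ∈ range (r ^ (n + 1 - k)),
        (∑ l ∈ range (r - 1), μ.real (deviationEvent μ (truncBlockSum r X L k h l) c) +
          μ.real (deviationEvent μ (excessBlockSum r X L k h) c)) ≤
      (r ^ (n + 2) * (Cd * (∫ x in {x | |Y x| ≤ L k}, Y x ^ 2 ∂μ +
          L k ^ 2 * μ.real {x | L (k - 1) < |Y x|})) +
        2 * r * fmax (r - 2) (fun l => ∑ h ∈ range (r ^ (n + 1 - k)),
          max (pairSum (1 + h * r ^ k) (h * r ^ k + (l + 1) * r ^ (k - 1))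
            fun i j => Gcov μ (X i) (X j) (L (k - 1))) 0) +
        2 * ∑ h ∈ range (r ^ (n + 1 - k)),
          max (pairSum (1 + h * r ^ k) (h * r ^ k + r ^ k)
            fun i j => Hcov μ (X i) (X j) (L (k - 1)) (L k)) 0) / c ^ 2 := by
  rw [mem_Icc] at hk
  set P := μ.real {x | L (k - 1) < |Y x|}
  set J := Cd * (∫ x in {x | |Y x| ≤ L k}, Y x ^ 2 ∂μ + L k ^ 2 * P)
  set mG : ℕ → ℕ → ℝ := fun h l =>
    max (pairSum (1 + h * r ^ k) (h * r ^ k + (l + 1) * r ^ (k - 1))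
      fun i j => Gcov μ (X i) (X j) (L (k - 1))) 0
  set mH : ℕ → ℝ := fun h => max (pairSum (1 + h * r ^ k) (h * r ^ k + r ^ k)
    fun i j => Hcov μ (X i) (X j) (L (k - 1)) (L k)) 0
  set G := fmax (r - 2) fun l => ∑ h ∈ range (r ^ (n + 1 - k)), mG h l
  have hJ : L k ^ 2 * (Cd * P) ≤ J := by
    have : 0 ≤ Cd * ∫ x in {x | |Y x| ≤ L k}, Y x ^ 2 ∂μ := mul_nonneg hCd
      (setIntegral_nonneg (measurableSet_le hY.abs measurable_const) fun _ _ => sq_nonneg _)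
    simp only [J]; nlinarith
  have hJ₀ : 0 ≤ J := (mul_nonneg (sq_nonneg _) (mul_nonneg hCd measureReal_nonneg)).trans hJ
  have hE : ∀ h, ∀ l ∈ range (r - 1),
      μ.real (deviationEvent μ (truncBlockSum r X L k h l) c) ≤
        (r ^ k * J + 2 * mG h l) / c ^ 2 :=
    fun h l hl => measureReal_deviationEvent_truncBlockSum_le hX hdom hCd hY hk.1
      (by rw [mem_range] at hl; omega) hL.le hLK hc
  have hF : ∀ h, μ.real (deviationEvent μ (excessBlockSum r X L k h) c) ≤
      (r ^ k * J + 2 * mH h) / c ^ 2 := fun h =>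
    (measureReal_deviationEvent_excessBlockSum_le hX hdom hCd hL hLK hc).trans (by gcongr)
  have hG : 0 ≤ G := (sum_nonneg fun h _ => le_max_right _ _).trans
    (le_fmax (fun l => ∑ h ∈ range (r ^ (n + 1 - k)), mG h l) (Nat.zero_le (r - 2)))
  have hGsum :
      ∑ h ∈ range (r ^ (n + 1 - k)), ∑ l ∈ range (r - 1), mG h l ≤ (r - 1) * G := by
    rw [sum_comm]
    refine (sum_le_sum fun l hl => le_fmax (N := r - 2)
      (fun l => ∑ h ∈ range (r ^ (n + 1 - k)), mG h l) ?_).trans_eq ?_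
    · rw [mem_range] at hl; omega
    · rw [sum_const, card_range, nsmul_eq_mul, Nat.cast_sub hr, Nat.cast_one]
  have hJsum : ((r ^ (n + 1 - k) : ℕ) : ℝ) * ((r - 1 : ℕ) * (r ^ k * J)) +
      (r ^ (n + 1 - k) : ℕ) * (r ^ k * J) = r ^ (n + 2) * J := by
    rw [Nat.cast_sub hr, Nat.cast_pow, Nat.cast_one, pow_succ _ (n + 1),
      ← Nat.sub_add_cancel hk.2, pow_add, Nat.add_sub_cancel]
    ring
  calc _ ≤ ∑ h ∈ range (r ^ (n + 1 - k)), (∑ l ∈ range (r - 1),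
        (r ^ k * J + 2 * mG h l) / c ^ 2 + (r ^ k * J + 2 * mH h) / c ^ 2) := by
        gcongr with h hh l hl
        · exact hE h l hl
        · exact hF h
    _ = ((r ^ (n + 1 - k) : ℕ) * ((r - 1 : ℕ) * (r ^ k * J)) +
          (r ^ (n + 1 - k) : ℕ) * (r ^ k * J) +
          2 * ∑ h ∈ range (r ^ (n + 1 - k)), ∑ l ∈ range (r - 1), mG h l +
          2 * ∑ h ∈ range (r ^ (n + 1 - k)), mH h) / c ^ 2 := by
        simp only [← sum_div, ← add_div, sum_add_distrib, sum_const, card_range, nsmul_eq_mul,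
          mul_sum]
        ring
    _ ≤ _ := by
        rw [hJsum]
        gcongr ?_ / _
        nlinarith

lemma measureReal_badEvent_le (hr : 1 ≤ r) (hX : ∀ i, 1 ≤ i → Measurable (X i))
    (hdom : ∀ i, 1 ≤ i → TailDominated μ Cd (X i) Y) (hCd : 0 ≤ Cd) (hY : Measurable Y)
    (hL : Monotone L) (hL0 : 0 < L 0) {n : ℕ} {c : ℕ → ℝ}
    (hc : ∀ k ∈ Icc 1 (n + 1), 0 < c k) :
    μ.real (badEvent μ r X L n c) ≤
      r ^ (n + 1) * (Cd * μ.real {x | L (n + 1) < |Y x|}) +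
        ∑ k ∈ Icc 1 (n + 1),
          (r ^ (n + 2) * (Cd * (∫ x in {x | |Y x| ≤ L k}, Y x ^ 2 ∂μ +
              L k ^ 2 * μ.real {x | L (k - 1) < |Y x|})) +
            2 * r * fmax (r - 2) (fun l => ∑ h ∈ range (r ^ (n + 1 - k)),
              max (pairSum (1 + h * r ^ k) (h * r ^ k + (l + 1) * r ^ (k - 1))
                fun i j => Gcov μ (X i) (X j) (L (k - 1))) 0) +
            2 * ∑ h ∈ range (r ^ (n + 1 - k)),
              max (pairSum (1 + h * r ^ k) (h * r ^ k + r ^ k)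
                fun i j => Hcov μ (X i) (X j) (L (k - 1)) (L k)) 0) / c k ^ 2 := by
  have hLpos : ∀ k, 0 < L k := fun k => hL0.trans_le (hL k.zero_le)
  have hA : μ.real (⋃ i ∈ Icc 1 (r ^ (n + 1) - 1), {ω | L (n + 1) < |X i ω|}) ≤
      r ^ (n + 1) * (Cd * μ.real {x | L (n + 1) < |Y x|}) := by
    refine (measureReal_biUnion_finset_le _ _).trans ((sum_le_sum fun i hi =>
      (hdom i (mem_Icc.1 hi).1).measureReal_le hCd (hLpos _)).trans ?_)
    rw [sum_const, Nat.card_Icc, nsmul_eq_mul, Nat.add_sub_cancel]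
    refine mul_le_mul_of_nonneg_right ?_ (mul_nonneg hCd measureReal_nonneg)
    exact_mod_cast Nat.sub_le _ _
  refine (measureReal_union_le _ _).trans (add_le_add hA ?_)
  refine (measureReal_biUnion_finset_le _ _).trans (sum_le_sum fun k hk => ?_)
  refine (measureReal_biUnion_finset_le _ _).trans ((sum_le_sum fun h _ =>
    (measureReal_union_le _ _).trans
      (add_le_add_left (measureReal_biUnion_finset_le _ _) _)).trans ?_)
  exact sum_measureReal_deviationEvent_le hr hX hdom hCd hY hk (hLpos _) (hL (Nat.sub_le k 1))
    (hc k hk)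

lemma measureReal_lt_fmax_le (hr : 2 ≤ r) (hX : ∀ i, 1 ≤ i → Measurable (X i))
    (hdom : ∀ i, 1 ≤ i → TailDominated μ Cd (X i) Y) (hCd : 0 ≤ Cd) (hY : Measurable Y)
    (hYi : Integrable Y μ) (hL : Monotone L) (hL0 : 0 < L 0) {n : ℕ} {c : ℕ → ℝ}
    (hc : ∀ k ∈ Icc 1 (n + 1), 0 < c k) {s : ℝ}
    (hs : 2 * ∑ k ∈ Icc 1 (n + 1), c k + 3 * Cd *
      ∑ k ∈ Icc 1 (n + 1), (r : ℝ) ^ k * ∫ x in {x | L (k - 1) < |Y x|}, |Y x| ∂μ ≤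
        s) :
    μ.real {ω | s < fmax (r ^ (n + 1) - 2)
        fun m => |∑ k ∈ Icc 1 (m + 1), (X k ω - ∫ x, X k x ∂μ)|} ≤
      r ^ (n + 1) * (Cd * μ.real {x | L (n + 1) < |Y x|}) +
        ∑ k ∈ Icc 1 (n + 1),
          (r ^ (n + 2) * (Cd * (∫ x in {x | |Y x| ≤ L k}, Y x ^ 2 ∂μ +
              L k ^ 2 * μ.real {x | L (k - 1) < |Y x|})) +
            2 * r * fmax (r - 2) (fun l => ∑ h ∈ range (r ^ (n + 1 - k)),
              max (pairSum (1 + h * r ^ k) (h * r ^ k + (l + 1) * r ^ (k - 1))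
                fun i j => Gcov μ (X i) (X j) (L (k - 1))) 0) +
            2 * ∑ h ∈ range (r ^ (n + 1 - k)),
              max (pairSum (1 + h * r ^ k) (h * r ^ k + r ^ k)
                fun i j => Hcov μ (X i) (X j) (L (k - 1)) (L k)) 0) / c k ^ 2 := by
  refine (measureReal_mono fun ω hω => ?_).trans
    (measureReal_badEvent_le (by omega) hX hdom hCd hY hL hL0 hc)
  by_contra hbad
  have hrn : r ≤ r ^ (n + 1) := Nat.le_self_pow (Nat.succ_ne_zero n) r
  refine not_lt.2 (fmax_le fun m hm => ?_) hω
  exact (abs_sum_sub_integral_le_of_notMem_badEvent hX hdom hCd hY hYi hL hL0.le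
    (fun k hk => (hc k hk).le) (by omega) hbad).trans hs

end Blocks

lemma two_mul_sum_add_three_mul_le {s : Finset ℕ} {a : ℕ → ℝ} {ε Ca Cd b B : ℝ}
    (hε : 0 < ε) (hCa : 0 < Ca) (hCd : 0 ≤ Cd) (hb : 0 < b) (ha : ∑ k ∈ s, a k ≤ Ca * b)
    (hB : B / b < ε / (6 * (Cd + 1))) :
    2 * ∑ k ∈ s, ε * a k / (4 * Ca) + 3 * Cd * B ≤ ε * b := by
  have h₁ : 2 * ∑ k ∈ s, ε * a k / (4 * Ca) ≤ ε * b / 2 := by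
    rw [← sum_div, ← mul_sum, mul_div_assoc', div_le_div_iff₀ (by positivity) two_pos]
    nlinarith
  have h₂ : 3 * Cd * B ≤ ε * b / 2 := by
    rw [div_lt_div_iff₀ hb (by positivity)] at hB
    nlinarith
  linarith

lemma add_sum_div_sq_le {s : Finset ℕ} {ρ ε Ca Cd Q : ℝ} {n : ℕ} {a I P G H K : ℕ → ℝ}
    (hρ : 1 ≤ ρ) (hε : 0 < ε) (hCa : 0 < Ca) (hCd : 0 ≤ Cd) (hQ : 0 ≤ Q)
    (ha : ∀ k ∈ s, 0 < a k) (hI : ∀ k ∈ s, 0 ≤ I k) (hP : ∀ k ∈ s, 0 ≤ P k)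
    (hG : ∀ k ∈ s, 0 ≤ G k) (hH : ∀ k ∈ s, 0 ≤ H k) :
    ρ ^ (n + 1) * (Cd * Q) +
        ∑ k ∈ s, (ρ ^ (n + 2) * (Cd * (I k + K k ^ 2 * P k)) + 2 * ρ * G k + 2 * H k) /
          (ε * a k / (4 * Ca)) ^ 2 ≤
      32 * (Ca ^ 2 + 1) * (Cd + 1) * ρ ^ 2 * ρ ^ n * Q +
        32 * (Ca ^ 2 + 1) * (Cd + 1) * ρ ^ 2 * ρ ^ n / ε ^ 2 *
          ∑ k ∈ s, (a k ^ 2)⁻¹ * I k +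
        32 * (Ca ^ 2 + 1) * (Cd + 1) * ρ ^ 2 * ρ ^ n / ε ^ 2 *
          ∑ k ∈ s, K k ^ 2 / a k ^ 2 * P k +
        32 * (Ca ^ 2 + 1) * (Cd + 1) * ρ ^ 2 / ε ^ 2 * ∑ k ∈ s, (a k ^ 2)⁻¹ * G k +
        32 * (Ca ^ 2 + 1) * (Cd + 1) * ρ ^ 2 / ε ^ 2 * ∑ k ∈ s, (a k ^ 2)⁻¹ * H k := by
  set C := 32 * (Ca ^ 2 + 1) * (Cd + 1) * ρ ^ 2
  set D := (Ca ^ 2 + 1) * (Cd + 1)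
  have hCa2 := sq_nonneg Ca
  have hDa : Ca ^ 2 ≤ D := by nlinarith
  have hDd : Cd ≤ D := by nlinarith
  have hρρ : ρ ≤ ρ ^ 2 := by nlinarith
  have hC₀ : ρ * Cd ≤ C := by
    have := mul_le_mul hρρ hDd hCd (by positivity)
    simp only [C, D] at this ⊢; nlinarith
  have hC₁ : 16 * Ca ^ 2 * ρ ^ 2 * Cd ≤ C := by
    have : 16 * Ca ^ 2 * Cd ≤ 32 * D := by nlinarith
    simp only [C, D] at this ⊢; nlinarith
  have hC₂ : 32 * Ca ^ 2 * ρ ≤ C := by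
    have := mul_le_mul hDa hρρ (by linarith) (by positivity)
    simp only [C, D] at this ⊢; nlinarith
  have hC₃ : 32 * Ca ^ 2 ≤ C := by
    simp only [C, D] at hDa ⊢; nlinarith [one_le_pow₀ (n := 2) hρ]
  simp only [mul_sum, add_assoc, ← sum_add_distrib]
  refine add_le_add ?_ (sum_le_sum fun k hk => ?_)
  · calc ρ ^ (n + 1) * (Cd * Q) = ρ * Cd * (ρ ^ n * Q) := by ring
      _ ≤ C * (ρ ^ n * Q) := mul_le_mul_of_nonneg_right hC₀ (by positivity)
      _ = C * ρ ^ n * Q := by ring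
  · have hak := ha k hk
    have hinv : ((ε * a k / (4 * Ca)) ^ 2)⁻¹ = 16 * Ca ^ 2 * ((a k ^ 2)⁻¹ / ε ^ 2) := by
      field_simp; norm_num
    have hu : 0 ≤ (a k ^ 2)⁻¹ / ε ^ 2 := by positivity
    have := hI k hk; have := hP k hk; have := hG k hk; have := hH k hk
    rw [div_eq_mul_inv, hinv]
    calc _ = 16 * Ca ^ 2 * ρ ^ 2 * Cd * ((a k ^ 2)⁻¹ / ε ^ 2 * (ρ ^ n * I k)) +
          16 * Ca ^ 2 * ρ ^ 2 * Cd * ((a k ^ 2)⁻¹ / ε ^ 2 * (ρ ^ n * (K k ^ 2 * P k))) +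
          32 * Ca ^ 2 * ρ * ((a k ^ 2)⁻¹ / ε ^ 2 * G k) +
          32 * Ca ^ 2 * ((a k ^ 2)⁻¹ / ε ^ 2 * H k) := by ring
      _ ≤ C * ((a k ^ 2)⁻¹ / ε ^ 2 * (ρ ^ n * I k)) +
          C * ((a k ^ 2)⁻¹ / ε ^ 2 * (ρ ^ n * (K k ^ 2 * P k))) +
          C * ((a k ^ 2)⁻¹ / ε ^ 2 * G k) + C * ((a k ^ 2)⁻¹ / ε ^ 2 * H k) := by
        gcongr
      _ = _ := by ring

/-- Corollary 2.1 (maximal inequality under stochastic domination). -/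
theorem maximal_inequality_stoch_dom
    (μ : Measure Ω) [IsProbabilityMeasure μ]
    (r : ℕ) (hr : 1 < r)
    (X : ℕ → Ω → ℝ) (Y : Ω → ℝ)
    (hXmeas : ∀ n : ℕ, 1 ≤ n → Measurable (X n)) (hYmeas : Measurable Y)
    (hdom : StochDom μ X Y) (hYint : Integrable Y μ)
    (b : ℕ → ℝ) (hbpos : ∀ n : ℕ, 1 ≤ n → 0 < b n)
    (hbmono : ∀ m n : ℕ, 1 ≤ m → m ≤ n → b m ≤ b n)
    (a : ℕ → ℕ → ℝ)
    (hapos : ∀ n k : ℕ, 1 ≤ n → 1 ≤ k → k ≤ n + 1 → 0 < a n k)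
    -- (a)  ∑_{k=1}^{n+1} a_{n,k} = O(b_{r^n})
    (ha : ∃ Ca : ℝ, 0 < Ca ∧ ∀ᶠ n : ℕ in atTop,
        ∑ k ∈ Finset.Icc 1 (n + 1), a n k ≤ Ca * b (r ^ n))
    -- (b')  ∑_{k=1}^{n+1} r^k E[|Y| 1{|Y| > b_{r^{k-1}}}] = o(b_{r^n})
    (hb' : Tendsto (fun n : ℕ =>
        (∑ k ∈ Finset.Icc 1 (n + 1),
          (r : ℝ) ^ k * ∫ ω in {ω | b (r ^ (k - 1)) < |Y ω|}, |Y ω| ∂μ) / b (r ^ n))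
        atTop (nhds 0)) :
    ∃ C : ℝ, 0 < C ∧ ∀ ε : ℝ, 0 < ε → ∃ n₀ : ℕ, 0 < n₀ ∧ ∀ n : ℕ, n₀ ≤ n →
      (μ {ω | ε * b (r ^ n) <
          fmax (r ^ (n + 1) - 2) (fun m =>
            |∑ k ∈ Finset.Icc 1 (m + 1), (X k ω - ∫ x, X k x ∂μ)|)}).toReal ≤
        C * (r : ℝ) ^ n * (μ {ω | b (r ^ (n + 1)) < |Y ω|}).toReal
        + C * (r : ℝ) ^ n / ε ^ 2 *
            ∑ k ∈ Finset.Icc 1 (n + 1),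
              ((a n k) ^ 2)⁻¹ * ∫ ω in {ω | |Y ω| ≤ b (r ^ k)}, (Y ω) ^ 2 ∂μ
        + C * (r : ℝ) ^ n / ε ^ 2 *
            ∑ k ∈ Finset.Icc 1 (n + 1),
              (b (r ^ k)) ^ 2 / (a n k) ^ 2 * (μ {ω | b (r ^ (k - 1)) < |Y ω|}).toReal
        + C / ε ^ 2 *
            ∑ k ∈ Finset.Icc 1 (n + 1),
              ((a n k) ^ 2)⁻¹ *
                fmax (r - 2) (fun l =>
                  ∑ h ∈ Finset.range (r ^ (n + 1 - k)),
                    max (pairSum (1 + h * r ^ k) (h * r ^ k + (l + 1) * r ^ (k - 1))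
                      (fun i j => Gcov μ (X i) (X j) (b (r ^ (k - 1))))) 0)
        + C / ε ^ 2 *
            ∑ k ∈ Finset.Icc 1 (n + 1),
              ((a n k) ^ 2)⁻¹ *
                ∑ h ∈ Finset.range (r ^ (n + 1 - k)),
                  max (pairSum (1 + h * r ^ k) (h * r ^ k + r ^ k)
                    (fun i j => Hcov μ (X i) (X j) (b (r ^ (k - 1))) (b (r ^ k)))) 0 := by
  obtain ⟨Cd, hCd, hdom⟩ := hdom
  obtain ⟨Ca, hCa, ha⟩ := ha
  set L : ℕ → ℝ := fun k => b (r ^ k)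
  have hL : Monotone L := fun i j hij =>
    hbmono _ _ (Nat.one_le_pow _ _ (by omega)) (Nat.pow_le_pow_right (by omega) hij)
  have hLpos : ∀ k, 0 < L k := fun k => hbpos _ (Nat.one_le_pow _ _ (by omega))
  refine ⟨32 * (Ca ^ 2 + 1) * (Cd + 1) * r ^ 2, by positivity, fun ε hε => ?_⟩
  obtain ⟨n₁, hn₁⟩ := ((hb'.eventually_lt_const
    (show 0 < ε / (6 * (Cd + 1)) by positivity)).and ha).exists_forall_of_atTop
  refine ⟨max n₁ 1, by omega, fun n hn => ?_⟩
  obtain ⟨htail, hsum⟩ := hn₁ n (le_of_max_le_left hn)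
  have ha' : ∀ k ∈ Icc 1 (n + 1), 0 < a n k := fun k hk =>
    hapos n k (le_of_max_le_right hn) (mem_Icc.1 hk).1 (mem_Icc.1 hk).2
  refine (measureReal_lt_fmax_le hr hXmeas hdom hCd.le hYmeas hYint hL (hLpos 0)
    (fun k hk => by have := ha' k hk; positivity)
    (two_mul_sum_add_three_mul_le hε hCa hCd.le (hLpos n) hsum htail)).trans ?_
  exact add_sum_div_sq_le (by exact_mod_cast hr.le) hε hCa hCd.le measureReal_nonneg ha'
    (fun k _ => setIntegral_nonneg (measurableSet_le hYmeas.abs measurable_const)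
      fun _ _ => sq_nonneg _)
    (fun k _ => measureReal_nonneg)
    (fun k _ => fmax_nonneg (sum_nonneg fun _ _ => le_max_right _ _))
    (fun k _ => sum_nonneg fun _ _ => le_max_right _ _)
end
end

section
/- Let r > 1 be an integer, 1 ≤ p < 2, and X a real random variable with E|X|^p < ∞. Then Σ_{k=1}^{∞} r^k P{|X| > r^{(k−1)/p}} ≤ (r²/(r − 1)) E|X|^p; in particular this series converges. -/
open MeasureTheory Finset Filter
open scoped ENNReal

noncomputable section

variable {Ω : Type*} [MeasurableSpace Ω]

/-! With `Y = |X|^p`, the set `{r^{k/p} < |X|}` is `{r^k < Y}`, and by Tonelli the series equals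
`∫ ∑_{k : r^k < Y} r^{k+1} dμ`. For fixed `y` the inner sum is geometric, hence at most
`r/(r-1)` times its last term `r^{m+1}`, where `r^m < y`: so it is bounded by `r²/(r-1) · y`. -/

section GeometricTail

variable {r : ℝ}

theorem sum_range_pow_succ_le (hr : 1 < r) (n : ℕ) :
    ∑ k ∈ range (n + 1), r ^ (k + 1) ≤ r ^ 2 / (r - 1) * r ^ n := by
  have hr0 : 0 < r - 1 := by linarith
  calc ∑ k ∈ range (n + 1), r ^ (k + 1)
      = r * ((r ^ (n + 1) - 1) / (r - 1)) := by
        rw [← geom_sum_eq hr.ne', mul_sum]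
        exact sum_congr rfl fun k _ => pow_succ' r k
    _ ≤ r * (r ^ (n + 1) / (r - 1)) := by
        gcongr
        linarith
    _ = r ^ 2 / (r - 1) * r ^ n := by ring

theorem sum_pow_succ_le_of_forall_pow_lt (hr : 1 < r) {y : ℝ} {s : Finset ℕ}
    (hs : s.Nonempty) (hsy : ∀ k ∈ s, r ^ k < y) :
    ∑ k ∈ s, r ^ (k + 1) ≤ r ^ 2 / (r - 1) * y := by
  have hsub : s ⊆ range (s.max' hs + 1) := fun k hk =>
    mem_range.mpr (Nat.lt_succ_of_le (s.le_max' k hk))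
  calc ∑ k ∈ s, r ^ (k + 1)
      ≤ ∑ k ∈ range (s.max' hs + 1), r ^ (k + 1) :=
        sum_le_sum_of_subset_of_nonneg hsub fun k _ _ => by positivity
    _ ≤ r ^ 2 / (r - 1) * r ^ s.max' hs := sum_range_pow_succ_le hr _
    _ ≤ r ^ 2 / (r - 1) * y := by
        have : 0 < r - 1 := by linarith
        gcongr
        exact (hsy _ (s.max'_mem hs)).le

theorem tsum_ite_pow_lt_le (hr : 1 < r) (y : ℝ) :
    ∑' k : ℕ, (if r ^ k < y then ENNReal.ofReal (r ^ (k + 1)) else 0) ≤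
      ENNReal.ofReal (r ^ 2 / (r - 1) * y) := by
  refine ENNReal.tsum_le_of_sum_range_le fun n => ?_
  rw [← sum_filter]
  rcases ((range n).filter fun k => r ^ k < y).eq_empty_or_nonempty with hs | hs
  · simp [hs]
  · rw [← ENNReal.ofReal_sum_of_nonneg fun k _ => by positivity]
    exact ENNReal.ofReal_le_ofReal <|
      sum_pow_succ_le_of_forall_pow_lt hr hs fun k hk => (mem_filter.mp hk).2

theorem tsum_pow_succ_mul_measure_pow_lt_le (hr : 1 < r) (μ : Measure Ω) {Y : Ω → ℝ}
    (hY : AEMeasurable Y μ) :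
    ∑' k : ℕ, ENNReal.ofReal (r ^ (k + 1)) * μ {ω | r ^ k < Y ω} ≤
      ENNReal.ofReal (r ^ 2 / (r - 1)) * ∫⁻ ω, ENNReal.ofReal (Y ω) ∂μ := by
  have hset (k : ℕ) : NullMeasurableSet {ω | r ^ k < Y ω} μ :=
    nullMeasurableSet_lt aemeasurable_const hY
  have hC : 0 ≤ r ^ 2 / (r - 1) := div_nonneg (sq_nonneg r) (by linarith)
  calc ∑' k : ℕ, ENNReal.ofReal (r ^ (k + 1)) * μ {ω | r ^ k < Y ω}
      = ∫⁻ ω, ∑' k : ℕ, {ω | r ^ k < Y ω}.indicator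
          (fun _ => ENNReal.ofReal (r ^ (k + 1))) ω ∂μ := by
        rw [lintegral_tsum fun k => (aemeasurable_const.indicator₀ (hset k))]
        exact tsum_congr fun k => (lintegral_indicator_const₀ (hset k) _).symm
    _ ≤ ∫⁻ ω, ENNReal.ofReal (r ^ 2 / (r - 1)) * ENNReal.ofReal (Y ω) ∂μ := by
        refine lintegral_mono fun ω => ?_
        simp only [Set.indicator_apply, Set.mem_ofPred_eq]
        rw [← ENNReal.ofReal_mul hC]
        exact tsum_ite_pow_lt_le hr (Y ω)
    _ = ENNReal.ofReal (r ^ 2 / (r - 1)) * ∫⁻ ω, ENNReal.ofReal (Y ω) ∂μ :=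
        lintegral_const_mul'' _ hY.ennreal_ofReal

theorem summable_and_tsum_pow_succ_mul_measure_pow_lt_le (hr : 1 < r) (μ : Measure Ω)
    {Y : Ω → ℝ} (hY : Integrable Y μ) (hY0 : 0 ≤ᵐ[μ] Y) :
    Summable (fun k : ℕ => r ^ (k + 1) * (μ {ω | r ^ k < Y ω}).toReal) ∧
      ∑' k : ℕ, r ^ (k + 1) * (μ {ω | r ^ k < Y ω}).toReal ≤
        r ^ 2 / (r - 1) * ∫ ω, Y ω ∂μ := by
  set g : ℕ → ℝ≥0∞ := fun k => ENNReal.ofReal (r ^ (k + 1)) * μ {ω | r ^ k < Y ω}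
  have hC : 0 ≤ r ^ 2 / (r - 1) := div_nonneg (sq_nonneg r) (by linarith)
  have hg : ∑' k, g k ≤ ENNReal.ofReal (r ^ 2 / (r - 1) * ∫ ω, Y ω ∂μ) := by
    rw [ENNReal.ofReal_mul hC, ofReal_integral_eq_lintegral_ofReal hY hY0]
    exact tsum_pow_succ_mul_measure_pow_lt_le hr μ hY.aemeasurable
  have hg_top : ∑' k, g k ≠ ∞ := ne_top_of_le_ne_top ENNReal.ofReal_ne_top hg
  have hterm (k : ℕ) : r ^ (k + 1) * (μ {ω | r ^ k < Y ω}).toReal = (g k).toReal := by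
    rw [ENNReal.toReal_mul, ENNReal.toReal_ofReal (by positivity)]
  simp_rw [hterm]
  refine ⟨ENNReal.summable_toReal hg_top, ?_⟩
  rw [← ENNReal.tsum_toReal_eq (ENNReal.ne_top_of_tsum_ne_top hg_top)]
  calc (∑' k, g k).toReal
      ≤ (ENNReal.ofReal (r ^ 2 / (r - 1) * ∫ ω, Y ω ∂μ)).toReal :=
        ENNReal.toReal_mono ENNReal.ofReal_ne_top hg
    _ = r ^ 2 / (r - 1) * ∫ ω, Y ω ∂μ :=
        ENNReal.toReal_ofReal (mul_nonneg hC (integral_nonneg_of_ae hY0))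

end GeometricTail

theorem rpow_div_lt_iff_rpow_lt_rpow {r a p : ℝ} (hr : 0 ≤ r) (ha : 0 ≤ a) (hp : 0 < p)
    (x : ℝ) : r ^ (x / p) < a ↔ r ^ x < a ^ p := by
  rw [div_eq_mul_inv, Real.rpow_mul hr]
  exact Real.rpow_inv_lt_iff_of_pos (Real.rpow_nonneg hr x) ha hp

theorem geometric_tail_series_bound_general
    (μ : Measure Ω)
    (r : ℕ) (hr : 1 < r)
    (p : ℝ) (hp1 : 1 ≤ p)
    (X : Ω → ℝ)
    (hXp : Integrable (fun ω => |X ω| ^ p) μ) :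
    Summable (fun k : ℕ =>
        (r : ℝ) ^ (k + 1) * (μ {ω | (r : ℝ) ^ ((k : ℝ) / p) < |X ω|}).toReal) ∧
      (∑' k : ℕ,
        (r : ℝ) ^ (k + 1) * (μ {ω | (r : ℝ) ^ ((k : ℝ) / p) < |X ω|}).toReal) ≤
        (r : ℝ) ^ 2 / ((r : ℝ) - 1) * ∫ ω, |X ω| ^ p ∂μ := by
  have hset (k : ℕ) :
      {ω | (r : ℝ) ^ ((k : ℝ) / p) < |X ω|} = {ω | (r : ℝ) ^ k < |X ω| ^ p} := by
    ext ω
    simpa only [Set.mem_ofPred_eq, Real.rpow_natCast] using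
      rpow_div_lt_iff_rpow_lt_rpow r.cast_nonneg (abs_nonneg (X ω)) (by linarith) k
  simp_rw [hset]
  exact summable_and_tsum_pow_succ_mul_measure_pow_lt_le (by exact_mod_cast hr) μ hXp
    (ae_of_all _ fun ω => Real.rpow_nonneg (abs_nonneg (X ω)) p)

/-- geometric tail series bound. -/
theorem geometric_tail_series_bound
    (μ : Measure Ω) [IsProbabilityMeasure μ]
    (r : ℕ) (hr : 1 < r)
    (p : ℝ) (hp1 : 1 ≤ p) (hp2 : p < 2)
    (X : Ω → ℝ) (hX : Measurable X)
    (hXp : Integrable (fun ω => |X ω| ^ p) μ) :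
    Summable (fun k : ℕ =>
        (r : ℝ) ^ (k + 1) * (μ {ω | (r : ℝ) ^ ((k : ℝ) / p) < |X ω|}).toReal) ∧
      (∑' k : ℕ,
        (r : ℝ) ^ (k + 1) * (μ {ω | (r : ℝ) ^ ((k : ℝ) / p) < |X ω|}).toReal) ≤
        (r : ℝ) ^ 2 / ((r : ℝ) - 1) * ∫ ω, |X ω| ^ p ∂μ :=
  geometric_tail_series_bound_general μ r hr p hp1 X hXp
end
end

section
/- Let r > 1 be an integer, 1 ≤ p < 2, and X a real random variable with E|X|^p < ∞. Then Σ_{k=1}^{n+1} r^{k − n/p} E[|X| 1{|X| > r^{(k−1)/p}}] → 0 as n → ∞. -/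
open MeasureTheory Finset Filter

noncomputable section

variable {Ω : Type*} [MeasurableSpace Ω]

/-! On `{|X| > t}` we have `|X| ≤ t ^ (1 - p) * |X| ^ p`, so the `k`-th term is at most
`r * c ^ (n + 1 - k) * E[|X| ^ p; |X| > r ^ ((k - 1) / p)]` with `c = r ^ (-1 / p) < 1`.
These tail moments of `|X| ^ p` tend to zero by dominated convergence, and the convolution of
the summable sequence `c ^ m` with a null sequence is again a null sequence. -/

open Topology

theorem tendsto_sum_range_mul_sub_of_tendsto_zero {a b : ℕ → ℝ} (ha : Summable fun k => ‖a k‖)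
    (hb : Tendsto b atTop (𝓝 0)) :
    Tendsto (fun n => ∑ k ∈ range (n + 1), a (n - k) * b k) atTop (𝓝 0) := by
  obtain ⟨B, hB⟩ : ∃ B, ∀ k, ‖b k‖ ≤ B := by
    obtain ⟨B, hB⟩ := hb.norm.bddAbove_range
    exact ⟨B, fun k => hB ⟨k, rfl⟩⟩
  -- reindexed by `j = n - k`, the sums are dominated termwise by the summable `‖a j‖ * B`
  set F : ℕ → ℕ → ℝ := fun n j => if j ≤ n then a j * b (n - j) else 0
  have hF : ∀ n, ∑' j, F n j = ∑ k ∈ range (n + 1), a (n - k) * b k := fun n => by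
    rw [tsum_eq_sum (s := range (n + 1)) fun j hj => if_neg (by simpa using hj),
      ← sum_range_reflect]
    refine sum_congr rfl fun j hj => ?_
    have hj : j ≤ n := Nat.lt_succ_iff.mp (mem_range.mp hj)
    simp only [add_tsub_cancel_right, if_pos (Nat.sub_le n j), Nat.sub_sub_self hj]
  have hlim := tendsto_tsum_of_dominated_convergence (𝓕 := atTop) (f := F) (g := fun _ => 0)
    (ha.mul_right B) (fun j => ?_) (Eventually.of_forall fun n j => ?_)
  · simpa only [hF, tsum_zero] using hlim
  · have hbj := (hb.comp (tendsto_sub_atTop_nat j)).const_mul (a j)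
    rw [mul_zero] at hbj
    refine hbj.congr' ?_
    filter_upwards [eventually_ge_atTop j] with n hn
    simp [F, hn]
  · by_cases hj : j ≤ n
    · simpa [F, hj, norm_mul] using mul_le_mul_of_nonneg_left (hB (n - j)) (norm_nonneg (a j))
    · simpa [F, hj] using mul_nonneg (norm_nonneg (a j)) ((norm_nonneg _).trans (hB 0))

theorem le_rpow_one_sub_mul_rpow {t x p : ℝ} (ht : 0 < t) (htx : t ≤ x) (hp : 1 ≤ p) :
    x ≤ t ^ (1 - p) * x ^ p := by
  have hx : 0 < x := ht.trans_le htx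
  have hxt : 1 ≤ (x / t) ^ (p - 1) :=
    Real.one_le_rpow ((one_le_div ht).mpr htx) (by linarith)
  calc x ≤ (x / t) ^ (p - 1) * x := le_mul_of_one_le_left hx.le hxt
    _ = t ^ (1 - p) * x ^ p := by
      rw [Real.div_rpow hx.le ht.le, show 1 - p = -(p - 1) by ring, Real.rpow_neg ht.le,
        Real.rpow_sub_one hx.ne']
      field_simp

section

variable {μ : Measure Ω}

theorem setIntegral_gt_le_rpow_mul_setIntegral_rpow {f : Ω → ℝ} (hf : Measurable f) {t p : ℝ}
    (ht : 0 < t) (hp : 1 ≤ p) (hfp : IntegrableOn (fun ω => f ω ^ p) {ω | t < f ω} μ) :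
    ∫ ω in {ω | t < f ω}, f ω ∂μ ≤ t ^ (1 - p) * ∫ ω in {ω | t < f ω}, f ω ^ p ∂μ := by
  have hs : MeasurableSet {ω | t < f ω} := measurableSet_lt measurable_const hf
  have hbound : ∀ ω ∈ {ω | t < f ω}, f ω ≤ t ^ (1 - p) * f ω ^ p := fun ω hω =>
    le_rpow_one_sub_mul_rpow ht (le_of_lt hω) hp
  have hfi : IntegrableOn f {ω | t < f ω} μ := by
    refine Integrable.mono' (hfp.const_mul (t ^ (1 - p))) hf.aestronglyMeasurable ?_
    refine (ae_restrict_iff' hs).mpr (Eventually.of_forall fun ω hω => ?_)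
    rw [Real.norm_of_nonneg (ht.trans hω).le]
    exact hbound ω hω
  rw [← integral_const_mul]
  exact setIntegral_mono_on hfi (hfp.const_mul _) hs hbound

theorem tendsto_setIntegral_gt_atTop {f g : Ω → ℝ} (hf : Integrable f μ) (hg : Measurable g) :
    Tendsto (fun t : ℝ => ∫ ω in {ω | t < g ω}, f ω ∂μ) atTop (𝓝 0) := by
  have hempty : (⋂ t : ℝ, {ω | t < g ω}) = ∅ :=
    Set.eq_empty_of_forall_notMem fun ω hω => lt_irrefl (g ω) (Set.mem_iInter.mp hω (g ω))
  simpa [hempty] using tendsto_setIntegral_of_antitone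
    (fun t => measurableSet_lt measurable_const hg)
    (fun s t hst ω (hω : t < g ω) => show s < g ω from hst.trans_lt hω) ⟨0, hf.integrableOn⟩

theorem rpow_mul_setIntegral_gt_le {f : Ω → ℝ} (hf : Measurable f) {r p : ℝ} (hr : 0 < r)
    (hp : 1 ≤ p) {j n : ℕ} (hjn : j ≤ n)
    (hfp : IntegrableOn (fun ω => f ω ^ p) {ω | r ^ ((j : ℝ) / p) < f ω} μ) :
    r ^ ((j : ℝ) + 1 - n / p) * ∫ ω in {ω | r ^ ((j : ℝ) / p) < f ω}, f ω ∂μ ≤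
      r * ((r ^ (-1 / p)) ^ (n - j) * ∫ ω in {ω | r ^ ((j : ℝ) / p) < f ω}, f ω ^ p ∂μ) := by
  have hweight : r ^ ((j : ℝ) + 1 - n / p) * (r ^ ((j : ℝ) / p)) ^ (1 - p) =
      r * (r ^ (-1 / p)) ^ (n - j) := by
    rw [← Real.rpow_mul hr.le, ← Real.rpow_mul_natCast hr.le, Nat.cast_sub hjn,
      ← Real.rpow_add hr, mul_comm r, ← Real.rpow_add_one hr.ne']
    congr 1
    field_simp
    ring
  calc r ^ ((j : ℝ) + 1 - n / p) * ∫ ω in {ω | r ^ ((j : ℝ) / p) < f ω}, f ω ∂μ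
      ≤ r ^ ((j : ℝ) + 1 - n / p) *
          ((r ^ ((j : ℝ) / p)) ^ (1 - p) * ∫ ω in {ω | r ^ ((j : ℝ) / p) < f ω}, f ω ^ p ∂μ) :=
        mul_le_mul_of_nonneg_left
          (setIntegral_gt_le_rpow_mul_setIntegral_rpow hf (by positivity) hp hfp) (by positivity)
    _ = r * ((r ^ (-1 / p)) ^ (n - j) * ∫ ω in {ω | r ^ ((j : ℝ) / p) < f ω}, f ω ^ p ∂μ) := by
        rw [← mul_assoc, hweight, mul_assoc]

end

theorem weighted_truncated_first_moment_tendsto_zero_general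
    (μ : Measure Ω)
    (r : ℕ) (hr : 1 < r)
    (p : ℝ) (hp1 : 1 ≤ p)
    (X : Ω → ℝ) (hX : Measurable X)
    (hXp : Integrable (fun ω => |X ω| ^ p) μ) :
    Tendsto (fun n : ℕ =>
        ∑ k ∈ Finset.Icc 1 (n + 1),
          (r : ℝ) ^ ((k : ℝ) - (n : ℝ) / p) *
            ∫ ω in {ω | (r : ℝ) ^ (((k : ℝ) - 1) / p) < |X ω|}, |X ω| ∂μ)
      atTop (nhds 0) := by
  have hr1 : (1 : ℝ) < r := by exact_mod_cast hr
  have hp0 : 0 < p := by linarith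
  set c : ℝ := (r : ℝ) ^ (-1 / p)
  have hc : c < 1 := Real.rpow_lt_one_of_one_lt_of_neg hr1 (by simpa [neg_div] using hp0)
  have htail : Tendsto (fun j : ℕ => ∫ ω in {ω | (r : ℝ) ^ ((j : ℝ) / p) < |X ω|}, |X ω| ^ p ∂μ)
      atTop (𝓝 0) :=
    (tendsto_setIntegral_gt_atTop hXp hX.abs).comp
      ((tendsto_rpow_atTop_of_base_gt_one _ hr1).comp
        (tendsto_natCast_atTop_atTop.atTop_div_const hp0))
  have hbound := (tendsto_sum_range_mul_sub_of_tendsto_zero (a := fun k => c ^ k)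
    (summable_norm_iff.mpr (summable_geometric_of_lt_one (by positivity) hc)) htail).const_mul
    (r : ℝ)
  rw [mul_zero] at hbound
  refine squeeze_zero (fun n => sum_nonneg fun k _ => ?_) (fun n => ?_) hbound
  · exact mul_nonneg (by positivity) (setIntegral_nonneg
      (measurableSet_lt measurable_const hX.abs) fun ω _ => abs_nonneg _)
  · rw [← Ico_add_one_right_eq_Icc, ← zero_add 1, ← sum_Ico_add', zero_add, ← range_eq_Ico,
      mul_sum]
    refine sum_le_sum fun j hj => ?_
    push_cast
    rw [add_sub_cancel_right]
    exact rpow_mul_setIntegral_gt_le hX.abs (by positivity) hp1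
      (Nat.lt_succ_iff.mp (mem_range.mp hj)) hXp.integrableOn

/-- weighted truncated first moment sums tend to zero. -/
theorem weighted_truncated_first_moment_tendsto_zero
    (μ : Measure Ω) [IsProbabilityMeasure μ]
    (r : ℕ) (hr : 1 < r)
    (p : ℝ) (hp1 : 1 ≤ p) (hp2 : p < 2)
    (X : Ω → ℝ) (hX : Measurable X)
    (hXp : Integrable (fun ω => |X ω| ^ p) μ) :
    Tendsto (fun n : ℕ =>
        ∑ k ∈ Finset.Icc 1 (n + 1),
          (r : ℝ) ^ ((k : ℝ) - (n : ℝ) / p) *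
            ∫ ω in {ω | (r : ℝ) ^ (((k : ℝ) - 1) / p) < |X ω|}, |X ω| ∂μ)
      atTop (nhds 0) :=
  weighted_truncated_first_moment_tendsto_zero_general μ r hr p hp1 X hX hXp
end
end
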